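/- For every FO-identifiable 3-valued structure S and every 2-valued structure S♮ such that S♮ ⊨ F and S♮ embeds into S, S♮ satisfies the characteristic formula ξ^S. -/
import Mathlib


/-!
Common framework: 2-valued and 3-valued logical structures over a relational
vocabulary with a designated binary equality predicate, embedding, first-order
formulas with transitive closure and their Tarskian semantics, characteristic
formulas, canonical abstraction.
-/

namespace HeapAbs

/-- The three truth values 0, 1/2, 1. -/
inductive TV : Type
  | zero
  | half
  | one
  deriving DecidableEq

/-- Information order on truth values: `l1 ⊑ l2` iff `l1 = l2` or `l2 = 1/2`. -/
def TV.le (a b : TV) : Prop := a = b ∨ b = TV.half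

/-- `v` is the least upper bound (join) of the set `A` in the information order. -/
def TV.IsJoin (A : Set TV) (v : TV) : Prop :=
  (∀ a ∈ A, TV.le a v) ∧ ∀ w, (∀ a ∈ A, TV.le a w) → TV.le v w

/-- A (relational) vocabulary: a set of predicate symbols with arities and a
designated binary equality symbol. -/
structure Voc : Type 1 where
  rel : Type
  ar : rel → ℕ
  eqr : rel
  eq_ar : ar eqr = 2

/-- The pair `(u, v)` as a tuple (used for binary predicates). -/
def pair {α : Type _} {n : ℕ} (u v : α) : Fin n → α :=
  fun i => if (i : ℕ) = 0 then u else v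

/-- A 3-valued logical structure over the vocabulary `σ`. -/
structure Str3 (σ : Voc) : Type 1 where
  U : Type
  ι : (r : σ.rel) → (Fin (σ.ar r) → U) → TV
  eq_refl : ∀ u : U, ι σ.eqr (pair u u) ≠ TV.zero
  eq_ne : ∀ u v : U, u ≠ v → ι σ.eqr (pair u v) = TV.zero

/-- A 2-valued logical structure over `σ`: all predicate values are definite and
the equality symbol is interpreted as true equality. -/
structure Str2 (σ : Voc) : Type 1 where
  U : Type
  ι : (r : σ.rel) → (Fin (σ.ar r) → U) → Bool
  eq_iff : ∀ u v : U, ι σ.eqr (pair u v) = true ↔ u = v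

/-- The value of a predicate of a 2-valued structure, seen as a truth value. -/
def Str2.tv {σ : Voc} (C : Str2 σ) (r : σ.rel) (t : Fin (σ.ar r) → C.U) : TV :=
  if C.ι r t then TV.one else TV.zero

/-- `f` embeds the 2-valued structure `C` into the 3-valued structure `S`:
`f` is surjective and every predicate value of `C` is ⊑ the corresponding
value of `S`. -/
def Embeds {σ : Voc} (C : Str2 σ) (S : Str3 σ) (f : C.U → S.U) : Prop :=
  Function.Surjective f ∧
    ∀ (r : σ.rel) (t : Fin (σ.ar r) → C.U), TV.le (C.tv r t) (S.ι r (f ∘ t))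

/-- First-order formulas with transitive closure over vocabulary `σ`, with
free variables drawn from `V`. -/
inductive Fml (σ : Voc) : Type → Type 1 where
  | tru {V : Type} : Fml σ V
  | atom {V : Type} (r : σ.rel) (ts : Fin (σ.ar r) → V) : Fml σ V
  | not {V : Type} : Fml σ V → Fml σ V
  | or {V : Type} : Fml σ V → Fml σ V → Fml σ V
  | ex {V : Type} : Fml σ (Option V) → Fml σ V
  | tc {V : Type} (φ : Fml σ (Option (Option V))) (a b : V) : Fml σ V

/-- Tarskian satisfaction of a formula in a 2-valued structure under an
assignment `ρ` of the free variables. -/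
def Str2.Sat {σ : Voc} (C : Str2 σ) : {V : Type} → (V → C.U) → Fml σ V → Prop
  | _, _, .tru => True
  | _, ρ, .atom r ts => C.ι r (ρ ∘ ts) = true
  | _, ρ, .not φ => ¬ C.Sat ρ φ
  | _, ρ, .or φ ψ => C.Sat ρ φ ∨ C.Sat ρ ψ
  | _, ρ, .ex φ => ∃ m : C.U, C.Sat (fun v => Option.elim v m ρ) φ
  | _, ρ, .tc φ a b =>
      Relation.TransGen
        (fun x y => C.Sat (fun v => Option.elim v y (fun v' => Option.elim v' x ρ)) φ)
        (ρ a) (ρ b)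

/-- Satisfaction of a closed formula. -/
def SatC {σ : Voc} (C : Str2 σ) (φ : Fml σ Empty) : Prop :=
  C.Sat (fun x => x.elim) φ

namespace Fml

def fls {σ : Voc} {V : Type} : Fml σ V := .not .tru

def and {σ : Voc} {V : Type} (φ ψ : Fml σ V) : Fml σ V := .not (.or (.not φ) (.not ψ))

def imp {σ : Voc} {V : Type} (φ ψ : Fml σ V) : Fml σ V := .or (.not φ) ψ

def all {σ : Voc} {V : Type} (φ : Fml σ (Option V)) : Fml σ V := .not (.ex (.not φ))

def conj {σ : Voc} {V : Type} (l : List (Fml σ V)) : Fml σ V := l.foldr .and .tru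

def disj {σ : Voc} {V : Type} (l : List (Fml σ V)) : Fml σ V := l.foldr .or .fls

/-- Renaming of free variables. -/
def map {σ : Voc} : {V W : Type} → (V → W) → Fml σ V → Fml σ W
  | _, _, _, .tru => .tru
  | _, _, g, .atom r ts => .atom r (g ∘ ts)
  | _, _, g, .not φ => .not (φ.map g)
  | _, _, g, .or φ ψ => .or (φ.map g) (ψ.map g)
  | _, _, g, .ex φ => .ex (φ.map (Option.map g))
  | _, _, g, .tc φ a b => .tc (φ.map (Option.map (Option.map g))) (g a) (g b)

end Fml

/-- The characteristic formula `p^B` of the truth value `B` for the predicate `p`: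
`p^0 := ¬p`, `p^1 := p`, `p^{1/2} := true`. -/
def charFml {σ : Voc} {V : Type} (p : σ.rel) (ts : Fin (σ.ar p) → V) : TV → Fml σ V
  | TV.zero => .not (.atom p ts)
  | TV.one => .atom p ts
  | TV.half => .tru

/-- `node` is a family of node formulas (one per node of `S`, with a single free
variable `w`) witnessing that `S` is FO-identifiable: for every 2-valued `C`
embedding into `S` via `f` and every concrete node `uh`, `f uh = u` iff `C`
satisfies `node u` under `[w ↦ uh]`. -/
def IsNodeFamily {σ : Voc} (S : Str3 σ) (node : S.U → Fml σ Unit) : Prop :=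
  ∀ (C : Str2 σ) (f : C.U → S.U), Embeds C S f →
    ∀ (uh : C.U) (u : S.U), f uh = u ↔ C.Sat (fun _ => uh) (node u)

/-- `S` is FO-identifiable. -/
def FOIdentifiable {σ : Voc} (S : Str3 σ) : Prop :=
  ∃ node : S.U → Fml σ Unit, IsNodeFamily S node

/-- Mutual exclusivity of a family of node formulas: in every 2-valued structure
that embeds into `S`, every concrete node satisfies at most one node formula. -/
def MutExcl {σ : Voc} (S : Str3 σ) (node : S.U → Fml σ Unit) : Prop :=
  ∀ C : Str2 σ, (∃ f : C.U → S.U, Embeds C S f) →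
    ∀ (uh : C.U) (u1 u2 : S.U), u1 ≠ u2 →
      ¬ (C.Sat (fun _ => uh) (node u1) ∧ C.Sat (fun _ => uh) (node u2))

/-- `S` is a bounded structure: any two distinct nodes are distinguished by a
unary predicate having distinct definite values on them. -/
def Bounded {σ : Voc} (S : Str3 σ) : Prop :=
  ∀ u1 u2 : S.U, u1 ≠ u2 →
    ∃ p : σ.rel, σ.ar p = 1 ∧
      S.ι p (fun _ => u1) ≠ S.ι p (fun _ => u2) ∧
      S.ι p (fun _ => u1) ≠ TV.half ∧ S.ι p (fun _ => u2) ≠ TV.half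

/-- The node formula `node^S_u(w) := ⋀_{p unary} p^{ι^S(p)(u)}(w)`. -/
noncomputable def boundedNode {σ : Voc} [Fintype σ.rel] (S : Str3 σ) (u : S.U) : Fml σ Unit :=
  Fml.conj
    (((Finset.univ : Finset {p : σ.rel // σ.ar p = 1}).toList).map
      (fun p => charFml p.1 (fun _ => ()) (S.ι p.1 (fun _ => u))))

/-- The conjunction `⋀_j node_{t j}(w_j)` over the components of a tuple of
abstract nodes, as a formula with free variables `w_1, …, w_n`. -/
def nodeTuple {σ : Voc} (S : Str3 σ) (node : S.U → Fml σ Unit) {n : ℕ}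
    (t : Fin n → S.U) : Fml σ (Fin n) :=
  Fml.conj (List.ofFn fun j : Fin n => (node (t j)).map (fun _ => j))

/-- Universal closure of a formula with `n` free variables. -/
def closeAll {σ : Voc} : {n : ℕ} → Fml σ (Fin n) → Fml σ Empty
  | 0, φ => φ.map Fin.elim0
  | _ + 1, φ =>
      closeAll (Fml.all (φ.map (fun i => Fin.lastCases none (fun j => some j) i)))

/-- Existential closure of a formula with `n` free variables. -/
def closeEx {σ : Voc} : {n : ℕ} → Fml σ (Fin n) → Fml σ Empty
  | 0, φ => φ.map Fin.elim0
  | _ + 1, φ =>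
      closeEx (Fml.ex (φ.map (fun i => Fin.lastCases none (fun j => some j) i)))

/-- `∃ v : node_u(v)`. -/
noncomputable def existsNode {σ : Voc} (S : Str3 σ) (node : S.U → Fml σ Unit) (u : S.U) :
    Fml σ Empty :=
  .ex ((node u).map (fun _ => (none : Option Empty)))

/-- The totality formula `∀ w : ⋁_i node_{u_i}(w)`. -/
noncomputable def xiTotal {σ : Voc} (S : Str3 σ) [Fintype S.U] (node : S.U → Fml σ Unit) :
    Fml σ Empty :=
  Fml.all (Fml.disj
    (((Finset.univ : Finset S.U).toList).map
      (fun u => (node u).map (fun _ => (none : Option Empty)))))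

/-- The nullary characteristic formula `⋀_{p nullary} p^{ι^S(p)()}`. -/
noncomputable def xiNullary {σ : Voc} [Fintype σ.rel] (S : Str3 σ) : Fml σ Empty :=
  Fml.conj
    (((Finset.univ : Finset σ.rel).toList).map (fun p =>
      if h : σ.ar p = 0 then
        charFml p (fun i => Fin.elim0 (Fin.cast h i))
          (S.ι p (fun i => Fin.elim0 (Fin.cast h i)))
      else .tru))

/-- The predicate characteristic formula
`∀ w1 … wr : ⋀_{tuples ū} ((⋀_j node_{ū j}(w_j)) → p^{ι^S(p)(ū)}(w̄))`. -/
noncomputable def xiPred {σ : Voc} (S : Str3 σ) [Fintype S.U] (node : S.U → Fml σ Unit)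
    (p : σ.rel) : Fml σ Empty :=
  closeAll (Fml.conj
    (((Finset.univ : Finset (Fin (σ.ar p) → S.U)).toList).map
      (fun t => Fml.imp (nodeTuple S node t)
        (charFml p (fun j => j) (S.ι p t)))))

/-- Conjunction of the predicate characteristic formulas over all predicates of
arity ≥ 1. -/
noncomputable def xiPredAll {σ : Voc} [Fintype σ.rel] (S : Str3 σ) [Fintype S.U]
    (node : S.U → Fml σ Unit) : Fml σ Empty :=
  Fml.conj
    (((Finset.univ : Finset σ.rel).toList).map (fun p =>
      if σ.ar p = 0 then .tru else xiPred S node p))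

/-- The first-order characteristic formula `ξ^S` of `S` (w.r.t. the node
formulas `node`). -/
noncomputable def xi {σ : Voc} [Fintype σ.rel] (S : Str3 σ) [Fintype S.U]
    (node : S.U → Fml σ Unit) : Fml σ Empty :=
  (Fml.conj (((Finset.univ : Finset S.U).toList).map (existsNode S node))).and
    ((xiTotal S node).and ((xiNullary S).and (xiPredAll S node)))

/-- The concretization `γ(S)`: the 2-valued structures that embed into `S` and
satisfy the integrity formula `F`. -/
def gammaSet {σ : Voc} (F : Fml σ Empty) (S : Str3 σ) : Set (Str2 σ) :=
  {C | (∃ f : C.U → S.U, Embeds C S f) ∧ SatC C F}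

/-- `S` is the canonical abstraction of the 2-valued structure `C` via `blur`:
`blur` is a surjective embedding that identifies exactly the concrete nodes with
equal canonical names (the values of the unary predicates), and every abstract
predicate value is the join of the concrete values it represents. -/
def IsCanonAbs {σ : Voc} (C : Str2 σ) (S : Str3 σ) (blur : C.U → S.U) : Prop :=
  Embeds C S blur ∧
    (∀ u v : C.U, blur u = blur v ↔
      ∀ p : σ.rel, σ.ar p = 1 → C.ι p (fun _ => u) = C.ι p (fun _ => v)) ∧
    ∀ (p : σ.rel) (t' : Fin (σ.ar p) → S.U),
      TV.IsJoin {b | ∃ t : Fin (σ.ar p) → C.U, blur ∘ t = t' ∧ C.tv p t = b}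
        (S.ι p t')

/-- `S` is an image of canonical abstraction. -/
def ICA {σ : Voc} (S : Str3 σ) : Prop :=
  ∃ (C : Str2 σ) (blur : C.U → S.U), IsCanonAbs C S blur

/-- The concretization of `S` under canonical abstraction. -/
def gammaC {σ : Voc} (F : Fml σ Empty) (S : Str3 σ) : Set (Str2 σ) :=
  {C | (∃ blur : C.U → S.U, IsCanonAbs C S blur) ∧ SatC C F}

/-- `node` is a family of node formulas witnessing canonical-FO-identifiability
of `S`. -/
def IsCanonNodeFamily {σ : Voc} (S : Str3 σ) (node : S.U → Fml σ Unit) : Prop :=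
  ∀ (C : Str2 σ) (blur : C.U → S.U), IsCanonAbs C S blur →
    ∀ (uh : C.U) (u : S.U), blur uh = u ↔ C.Sat (fun _ => uh) (node u)

/-- `τ^S[p]`: for every tuple where `p` has value 1/2, there are concrete
tuples (satisfying the node formulas) on which `p` holds, resp., fails. -/
noncomputable def tauPred {σ : Voc} (S : Str3 σ) [Fintype S.U] (node : S.U → Fml σ Unit)
    (p : σ.rel) : Fml σ Empty :=
  Fml.conj
    (((((Finset.univ : Finset (Fin (σ.ar p) → S.U)).toList).filter
        (fun t => decide (S.ι p t = TV.half))).map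
      (fun t =>
        (closeEx ((nodeTuple S node t).and (.atom p (fun j => j)))).and
          (closeEx ((nodeTuple S node t).and (.not (.atom p (fun j => j))))))))

/-- `τ^S := ξ^S ∧ ⋀_{p of arity ≥ 2} τ^S[p]`. -/
noncomputable def tau {σ : Voc} [Fintype σ.rel] (S : Str3 σ) [Fintype S.U]
    (node : S.U → Fml σ Unit) : Fml σ Empty :=
  (xi S node).and
    (Fml.conj (((Finset.univ : Finset σ.rel).toList).map (fun p =>
      if 2 ≤ σ.ar p then tauPred S node p else .tru)))

/-- Isomorphism of 3-valued structures. -/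
def Iso3 {σ : Voc} (S1 S2 : Str3 σ) : Prop :=
  ∃ e : S1.U ≃ S2.U,
    ∀ (p : σ.rel) (t : Fin (σ.ar p) → S1.U), S1.ι p t = S2.ι p (e ∘ t)

/-- Satisfaction of the NP (existential monadic second-order) characteristic
formula `ψ^S` of `S` in the 2-valued structure `C`: there exist sets `V_u`
(one per node `u` of `S`) that are nonempty, pairwise disjoint, and cover `C`,
such that the nullary and the predicate characteristic conjuncts hold with
`node_{u}(w) := w ∈ V_u`. -/
def SatNP {σ : Voc} (S : Str3 σ) (C : Str2 σ) : Prop :=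
  ∃ V : S.U → Set C.U,
    (∀ u : S.U, ∃ w, w ∈ V u) ∧
    (∀ u1 u2 : S.U, u1 ≠ u2 →
      ∀ w1 ∈ V u1, ∀ w2 ∈ V u2, ¬ C.ι σ.eqr (pair w1 w2) = true) ∧
    (∀ w : C.U, ∃ u : S.U, w ∈ V u) ∧
    (∀ (p : σ.rel) (h : σ.ar p = 0),
      TV.le (C.tv p (fun i => Fin.elim0 (Fin.cast h i)))
        (S.ι p (fun i => Fin.elim0 (Fin.cast h i)))) ∧
    (∀ (p : σ.rel), 1 ≤ σ.ar p →
      ∀ (t : Fin (σ.ar p) → C.U) (us : Fin (σ.ar p) → S.U),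
        (∀ j, t j ∈ V (us j)) → TV.le (C.tv p t) (S.ι p us))


section Aux

variable {σ : Voc} (C : Str2 σ)

lemma sat_map {V : Type} (φ : Fml σ V) :
    ∀ {W : Type} (g : V → W) (ρ : W → C.U),
      C.Sat ρ (φ.map g) ↔ C.Sat (ρ ∘ g) φ := by
  induction φ with
  | tru => intro W g ρ; simp [Fml.map, Str2.Sat]
  | atom r ts => intro W g ρ; exact Iff.rfl
  | not φ ih => intro W g ρ; simp [Fml.map, Str2.Sat, ih]
  | or φ ψ ih1 ih2 => intro W g ρ; simp [Fml.map, Str2.Sat, ih1, ih2]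
  | ex φ ih =>
      intro W g ρ
      have key : ∀ m : C.U,
          ((fun v => Option.elim v m ρ) ∘ Option.map g) =
            (fun v => Option.elim v m (ρ ∘ g)) := by
        intro m; funext v; cases v <;> rfl
      simp only [Fml.map, Str2.Sat]
      refine exists_congr fun m => ?_
      rw [ih, key m]
  | tc φ a b ih =>
      intro W g ρ
      have hrel : (fun x y : C.U =>
          C.Sat (fun v => Option.elim v y fun v' => Option.elim v' x ρ)
            (φ.map (Option.map (Option.map g)))) =
          (fun x y : C.U =>
          C.Sat (fun v => Option.elim v y fun v' => Option.elim v' x (ρ ∘ g)) φ) := by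
        funext x y
        apply propext
        rw [ih]
        have : ((fun v => Option.elim v y fun v' => Option.elim v' x ρ) ∘
            Option.map (Option.map g)) =
            (fun v => Option.elim v y fun v' => Option.elim v' x (ρ ∘ g)) := by
          funext v; rcases v with _ | _ | a <;> rfl
        rw [this]
      show Relation.TransGen _ _ _ ↔ Relation.TransGen _ _ _
      rw [hrel]
      rfl

lemma sat_and {V : Type} (φ ψ : Fml σ V) (ρ : V → C.U) :
    C.Sat ρ (φ.and ψ) ↔ C.Sat ρ φ ∧ C.Sat ρ ψ := by
  simp only [Fml.and, Str2.Sat]; tauto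

lemma sat_imp {V : Type} (φ ψ : Fml σ V) (ρ : V → C.U) :
    C.Sat ρ (φ.imp ψ) ↔ (C.Sat ρ φ → C.Sat ρ ψ) := by
  simp only [Fml.imp, Str2.Sat]; tauto

lemma sat_conj {V : Type} (l : List (Fml σ V)) (ρ : V → C.U) :
    C.Sat ρ (Fml.conj l) ↔ ∀ φ ∈ l, C.Sat ρ φ := by
  induction l with
  | nil => simp [Fml.conj, Str2.Sat]
  | cons φ l ih =>
      simp only [Fml.conj, List.foldr_cons] at *
      rw [sat_and, ih]
      simp

lemma sat_disj {V : Type} (l : List (Fml σ V)) (ρ : V → C.U) :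
    C.Sat ρ (Fml.disj l) ↔ ∃ φ ∈ l, C.Sat ρ φ := by
  induction l with
  | nil => simp [Fml.disj, Fml.fls, Str2.Sat]
  | cons φ l ih =>
      simp only [Fml.disj, List.foldr_cons] at *
      show C.Sat ρ (.or _ _) ↔ _
      rw [show C.Sat ρ (.or φ (List.foldr Fml.or Fml.fls l)) ↔
        C.Sat ρ φ ∨ C.Sat ρ (List.foldr Fml.or Fml.fls l) from Iff.rfl, ih]
      simp

lemma sat_all {V : Type} (φ : Fml σ (Option V)) (ρ : V → C.U) :
    C.Sat ρ (Fml.all φ) ↔ ∀ m : C.U, C.Sat (fun v => Option.elim v m ρ) φ := by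
  simp only [Fml.all, Str2.Sat, not_exists, not_not]

lemma sat_closeAll : ∀ {n : ℕ} (φ : Fml σ (Fin n)),
    C.Sat (fun x : Empty => x.elim) (closeAll φ) ↔ ∀ ρ : Fin n → C.U, C.Sat ρ φ := by
  intro n
  induction n with
  | zero =>
      intro φ
      unfold closeAll
      rw [sat_map]
      constructor
      · intro h ρ
        have : ρ = ((fun x : Empty => x.elim) ∘ Fin.elim0) := funext fun i => i.elim0
        rw [this]; exact h
      · intro h; exact h _
  | succ n ih =>
      intro φ
      show C.Sat (fun x : Empty => x.elim) (closeAll (Fml.all (φ.map _))) ↔ _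
      rw [ih]
      constructor
      · intro h ρ'
        have h2 := (sat_all C _ _).mp (h (ρ' ∘ Fin.castSucc)) (ρ' (Fin.last n))
        rw [sat_map] at h2
        convert h2 using 2
        funext i
        refine Fin.lastCases ?_ (fun j => ?_) i <;> simp
      · intro h ρ
        rw [sat_all]
        intro m
        rw [sat_map]
        exact h _

lemma sat_charFml {V : Type} (p : σ.rel) (ts : Fin (σ.ar p) → V) (B : TV)
    (ρ : V → C.U) (h : TV.le (C.tv p (ρ ∘ ts)) B) :
    C.Sat ρ (charFml p ts B) := by
  cases B with
  | half => trivial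
  | one =>
      show C.ι p (ρ ∘ ts) = true
      rcases h with h | h
      · by_contra hc
        simp [Str2.tv, hc] at h
      · exact TV.noConfusion h
  | zero =>
      show ¬ C.ι p (ρ ∘ ts) = true
      rcases h with h | h
      · intro hc
        simp [Str2.tv, hc] at h
      · exact TV.noConfusion h

end Aux

/-- for every FO-identifiable `S` (with node formulas `node`) and
2-valued structure `C` with `C ⊨ F` that embeds into `S`, `C` satisfies `ξ^S`. -/
theorem embeds_sat_xi {σ : Voc} [Fintype σ.rel] (F : Fml σ Empty)
    (S : Str3 σ) [Fintype S.U] (node : S.U → Fml σ Unit)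
    (hnode : IsNodeFamily S node) (C : Str2 σ)
    (hF : SatC C F) (hemb : ∃ f : C.U → S.U, Embeds C S f) :
    SatC C (xi S node) := by
  obtain ⟨f, hf⟩ := hemb
  have hnodeC := hnode C f hf
  unfold xi SatC
  rw [sat_and]
  constructor
  · -- existsNode conjuncts
    rw [sat_conj]
    intro φ hφ
    rw [List.mem_map] at hφ
    obtain ⟨u, _, rfl⟩ := hφ
    unfold existsNode
    obtain ⟨m, hm⟩ := hf.1 u
    refine ⟨m, ?_⟩
    rw [sat_map]
    exact (hnodeC m u).mp hm
  rw [sat_and]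
  constructor
  · -- totality
    unfold xiTotal
    rw [sat_all]
    intro m
    rw [sat_disj]
    refine ⟨(node (f m)).map (fun _ => (none : Option Empty)), ?_, ?_⟩
    · exact List.mem_map.mpr ⟨f m, by simp [Finset.mem_toList], rfl⟩
    · rw [sat_map]
      exact (hnodeC m (f m)).mp rfl
  rw [sat_and]
  constructor
  · -- nullary
    unfold xiNullary
    rw [sat_conj]
    intro φ hφ
    rw [List.mem_map] at hφ
    obtain ⟨p, _, rfl⟩ := hφ
    by_cases h : σ.ar p = 0
    · rw [dif_pos h]
      apply sat_charFml
      have hie : IsEmpty (Fin (σ.ar p)) := by rw [h]; infer_instance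
      convert hf.2 p (fun i => Fin.elim0 (Fin.cast h i)) using 2 <;>
        exact Subsingleton.elim _ _
    · rw [dif_neg h]; trivial
  · -- predicate conjuncts
    unfold xiPredAll
    rw [sat_conj]
    intro φ hφ
    rw [List.mem_map] at hφ
    obtain ⟨p, _, rfl⟩ := hφ
    by_cases h : σ.ar p = 0
    · rw [if_pos h]; trivial
    · rw [if_neg h]
      unfold xiPred
      rw [sat_closeAll]
      intro ρ
      rw [sat_conj]
      intro ψ hψ
      rw [List.mem_map] at hψ
      obtain ⟨t, _, rfl⟩ := hψ
      rw [sat_imp]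
      intro hnt
      have hft : f ∘ ρ = t := by
        funext j
        unfold nodeTuple at hnt
        rw [sat_conj] at hnt
        have := hnt ((node (t j)).map (fun _ => j)) (by
          rw [List.mem_ofFn]; exact ⟨j, rfl⟩)
        rw [sat_map] at this
        exact (hnodeC (ρ j) (t j)).mpr this
      apply sat_charFml
      have := hf.2 p ρ
      rw [hft] at this
      have hρ : (ρ ∘ fun j => j) = ρ := rfl
      rw [hρ]
      exact this
end HeapAbs
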